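/- The rate sequence ρ is nondecreasing in k, satisfies ρ(k) ≤ r + 1/4 for every k ≥ 0, and is eventually equal to its optimal value: ρ(k) = r + 1/4 for every k ≥ K₁(ψ,r) + K̃₂(ψ,r) + 1. (In the paper: the k-step estimator's rate toward the MLE improves monotonically up to the intrinsic bound O_P(n^{−r−1/4}) determined by how accurately the nuisance parameter is estimated, and reaches that bound after finitely many iterations.) -/

import Mathlib

/-- `intLe x` is the smallest nonnegative integer `≥ x` (the paper's `int[x]`). -/
noncomputable def intLe (x : ℝ) : ℕ := sInf {k : ℕ | x ≤ (k : ℝ)}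

/-- The rate sequence `ρ` of Lemma 1: `ρ(0) = ψ` and the three-stage recursion. -/
noncomputable def rateSeq (r ψ : ℝ) : ℕ → ℝ
  | 0 => ψ
  | k + 1 =>
    if rateSeq r ψ k < r then (3 / 2) * rateSeq r ψ k
    else if rateSeq r ψ k < 1 / 2 then r + rateSeq r ψ k / 2
    else r + 1 / 4

/-- `S₁(ψ,k) = ψ (3/2)^k`. -/
noncomputable def S1 (ψ : ℝ) (k : ℕ) : ℝ := ψ * (3 / 2) ^ k

/-- `K₁(ψ,r) = int[log(r/ψ)/log(3/2)]`. -/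
noncomputable def K1 (ψ r : ℝ) : ℕ := intLe (Real.log (r / ψ) / Real.log (3 / 2))

/-- `S̃₁(ψ,r) = S₁(ψ, K₁(ψ,r))`. -/
noncomputable def S1t (ψ r : ℝ) : ℝ := S1 ψ (K1 ψ r)

/-- `K₂(x,r) = int[log((2r−x)/(2r−1/2))/log 2]`. -/
noncomputable def K2 (x r : ℝ) : ℕ :=
  intLe (Real.log ((2 * r - x) / (2 * r - 1 / 2)) / Real.log 2)

/-- `K̃₂(ψ,r) = K₂(S̃₁(ψ,r), r)`. -/
noncomputable def K2t (ψ r : ℝ) : ℕ := K2 (S1t ψ r) r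

/-!
The step map `ρ ↦ ρ(k+1)` is nondecreasing, sends `(0, r + 1/4]` into itself and
lies above the identity there, so `ρ` is nondecreasing and bounded by `r + 1/4`. Since the step
map is monotone, any sequence that it dominates step by step stays below `ρ`. Below `r` it
multiplies by `3/2`, giving `ρ(K₁) ≥ S̃₁ ≥ r`; above `r` it is `y ↦ r + y/2`, whose iterates
`2r - (2r - S̃₁)/2^j` pass `1/2` after `K̃₂` steps, and one more step lands on `r + 1/4`.
-/

lemma intLe_eq_ceil (x : ℝ) : intLe x = ⌈x⌉₊ := by
  have h : {k : ℕ | x ≤ (k : ℝ)} = Set.Ici ⌈x⌉₊ := by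
    ext k
    simp [Nat.ceil_le]
  rw [intLe, h, csInf_Ici]

lemma le_intLe (x : ℝ) : x ≤ intLe x := intLe_eq_ceil x ▸ Nat.le_ceil x

lemma le_pow_of_log_div_log_le {a b : ℝ} {n : ℕ} (hb : 1 < b)
    (h : Real.log a / Real.log b ≤ n) : a ≤ b ^ n := by
  rcases le_or_gt a 0 with ha | ha
  · exact ha.trans (by positivity)
  · rw [Real.log_div_log, Real.logb_le_iff_le_rpow hb ha] at h
    exact_mod_cast h

lemma pow_lt_of_lt_log_div_log {a b : ℝ} {n : ℕ} (ha : 0 < a) (hb : 1 < b)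
    (h : (n : ℝ) < Real.log a / Real.log b) : b ^ n < a := by
  rw [Real.log_div_log, Real.lt_logb_iff_rpow_lt hb ha] at h
  exact_mod_cast h

section Thresholds

variable {ψ r : ℝ}

lemma S1_lt_of_lt_K1 (hψ : 0 < ψ) (hr : 0 < r) {n : ℕ} (hn : n < K1 ψ r) : S1 ψ n < r := by
  rw [K1, intLe_eq_ceil, Nat.lt_ceil] at hn
  have h := pow_lt_of_lt_log_div_log (div_pos hr hψ) (by norm_num) hn
  rw [lt_div_iff₀ hψ] at h
  rw [S1]
  linarith

lemma le_S1t (hψ : 0 < ψ) : r ≤ S1t ψ r := by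
  have h : r / ψ ≤ (3 / 2 : ℝ) ^ K1 ψ r :=
    le_pow_of_log_div_log_le (by norm_num) (le_intLe _)
  rw [div_le_iff₀ hψ] at h
  rw [S1t, S1]
  linarith

lemma half_le_sub_div_pow_K2 (x : ℝ) (hr : 1 / 4 < r) :
    1 / 2 ≤ 2 * r - (2 * r - x) / 2 ^ K2 x r := by
  have h : (2 * r - x) / (2 * r - 1 / 2) ≤ (2 : ℝ) ^ K2 x r :=
    le_pow_of_log_div_log_le one_lt_two (le_intLe _)
  rw [div_le_iff₀ (by linarith)] at h
  have : (2 * r - x) / 2 ^ K2 x r ≤ 2 * r - 1 / 2 := by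
    rw [div_le_iff₀ (by positivity)]
    linarith
  linarith

end Thresholds

noncomputable def rateStep (r ρ : ℝ) : ℝ :=
  if ρ < r then (3 / 2) * ρ else if ρ < 1 / 2 then r + ρ / 2 else r + 1 / 4

section RateStep

variable {r ρ : ℝ}

lemma rateStep_of_lt (h : ρ < r) : rateStep r ρ = (3 / 2) * ρ := by
  simp [rateStep, h]

lemma rateStep_of_le_of_le_half (h₁ : r ≤ ρ) (h₂ : ρ ≤ 1 / 2) : rateStep r ρ = r + ρ / 2 := by
  unfold rateStep
  split_ifs <;> linarith

lemma rateStep_of_half_le (hr : r ≤ 1 / 2) (h : 1 / 2 ≤ ρ) : rateStep r ρ = r + 1 / 4 := by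
  unfold rateStep
  split_ifs <;> linarith

lemma rateStep_pos (hr : 0 < r) (hρ : 0 < ρ) : 0 < rateStep r ρ := by
  unfold rateStep
  split_ifs <;> linarith

lemma rateStep_le (hr : r ≤ 1 / 2) (ρ : ℝ) : rateStep r ρ ≤ r + 1 / 4 := by
  unfold rateStep
  split_ifs <;> linarith

lemma le_rateStep (hr : 1 / 4 < r) (hρ₀ : 0 ≤ ρ) (hρ : ρ ≤ r + 1 / 4) : ρ ≤ rateStep r ρ := by
  unfold rateStep
  split_ifs <;> linarith

lemma rateStep_monotone (hr : r ≤ 1 / 2) : Monotone (rateStep r) := by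
  intro a b hab
  unfold rateStep
  split_ifs <;> linarith

end RateStep

section RateSeq

variable {r ψ : ℝ}

lemma rateSeq_succ (r ψ : ℝ) (k : ℕ) : rateSeq r ψ (k + 1) = rateStep r (rateSeq r ψ k) := by
  rw [rateSeq, rateStep]

lemma rateSeq_pos (hr : 0 < r) (hψ : 0 < ψ) (k : ℕ) : 0 < rateSeq r ψ k := by
  induction k with
  | zero => exact hψ
  | succ k ih => exact rateSeq_succ r ψ k ▸ rateStep_pos hr ih

lemma rateSeq_le (hr : r ≤ 1 / 2) (hψ : ψ ≤ r + 1 / 4) (k : ℕ) : rateSeq r ψ k ≤ r + 1 / 4 := by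
  cases k with
  | zero => exact hψ
  | succ k => exact rateSeq_succ r ψ k ▸ rateStep_le hr _

lemma rateSeq_le_succ (hr₁ : 1 / 4 < r) (hr₂ : r ≤ 1 / 2) (hψ₀ : 0 < ψ) (hψ : ψ ≤ r + 1 / 4)
    (k : ℕ) : rateSeq r ψ k ≤ rateSeq r ψ (k + 1) :=
  rateSeq_succ r ψ k ▸
    le_rateStep hr₁ (rateSeq_pos (by linarith) hψ₀ k).le (rateSeq_le hr₂ hψ k)

lemma S1t_le_rateSeq_K1 (hr₀ : 0 < r) (hr₂ : r ≤ 1 / 2) (hψ : 0 < ψ) :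
    S1t ψ r ≤ rateSeq r ψ (K1 ψ r) := by
  refine (rateStep_monotone hr₂).seq_le_seq (x := S1 ψ) (K1 ψ r)
    (by simp [S1, rateSeq]) (fun k hk => ?_) (fun k _ => (rateSeq_succ r ψ k).ge)
  rw [rateStep_of_lt (S1_lt_of_lt_K1 hψ hr₀ hk), S1, S1, pow_succ]
  linarith

lemma min_sub_div_pow_le_rateSeq (hr₁ : 1 / 4 < r) (hr₂ : r ≤ 1 / 2) {x : ℝ} {m : ℕ}
    (hrx : r ≤ x) (hx : x ≤ rateSeq r ψ m) (j : ℕ) :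
    min (2 * r - (2 * r - x) / 2 ^ j) (1 / 2) ≤ rateSeq r ψ (m + j) := by
  set z : ℕ → ℝ := fun k => 2 * r - (2 * r - x) / 2 ^ k
  have hz_succ (k : ℕ) : z (k + 1) = r + z k / 2 := by
    simp only [z, pow_succ]
    field_simp
    ring
  have hz_ge (k : ℕ) : r ≤ z k := by
    induction k with
    | zero => simpa [z] using hrx
    | succ k ih =>
      rw [hz_succ]
      linarith
  refine (rateStep_monotone hr₂).seq_le_seq (x := fun k => min (z k) (1 / 2))
    (y := fun k => rateSeq r ψ (m + k)) j (by simpa [z] using (min_le_left _ _).trans hx)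
    (fun k _ => ?_) (fun k _ => (rateSeq_succ r ψ (m + k)).ge)
  rw [rateStep_of_le_of_le_half (le_min (hz_ge k) hr₂) (min_le_right _ _), hz_succ]
  rcases min_cases (z k) (1 / 2) with ⟨h, _⟩ | ⟨h, _⟩ <;> rw [h]
  · exact min_le_left _ _
  · exact (min_le_right _ _).trans (by linarith)

end RateSeq

/-- The rate sequence `ρ` is nondecreasing, bounded above by `r + 1/4`,
and equals `r + 1/4` for every `k ≥ K₁(ψ,r) + K̃₂(ψ,r) + 1`. -/
theorem rateSeq_monotone_bounded_eventually (r ψ : ℝ) (hr1 : 1 / 4 < r) (hr2 : r ≤ 1 / 2)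
    (hψ1 : 0 < ψ) (hψ2 : ψ ≤ 1 / 2) :
    (∀ k : ℕ, rateSeq r ψ k ≤ rateSeq r ψ (k + 1)) ∧
    (∀ k : ℕ, rateSeq r ψ k ≤ r + 1 / 4) ∧
    (∀ k : ℕ, K1 ψ r + K2t ψ r + 1 ≤ k → rateSeq r ψ k = r + 1 / 4) := by
  have hψ : ψ ≤ r + 1 / 4 := by linarith
  have hmono := rateSeq_le_succ hr1 hr2 hψ1 hψ
  refine ⟨hmono, rateSeq_le hr2 hψ, fun k hk => ?_⟩
  have hhalf : 1 / 2 ≤ rateSeq r ψ (K1 ψ r + K2t ψ r) :=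
    (le_min (half_le_sub_div_pow_K2 _ hr1) le_rfl).trans <|
      min_sub_div_pow_le_rateSeq hr1 hr2 (le_S1t hψ1) (S1t_le_rateSeq_K1 (by linarith) hr2 hψ1) _
  obtain ⟨m, rfl⟩ := Nat.exists_eq_add_of_le hk
  rw [Nat.add_right_comm, rateSeq_succ, rateStep_of_half_le hr2]
  exact hhalf.trans (monotone_nat_of_le_succ hmono (Nat.le_add_right _ m))
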